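/- For all y ∈ (1, ∞), the second derivative of the digamma function satisfies ψ''(y) ≥ -1/(y - 1/2)². -/

import Mathlib

open Real Filter Asymptotics MeasureTheory Set Topology

noncomputable def trigamma (y : ℝ) : ℝ := ∑' m : ℕ, 1 / (m + y)^2

noncomputable def psi2 (y : ℝ) : ℝ := -2 * ∑' m : ℕ, 1 / (m + y)^3

/-!
Each term of the series is dominated by a telescoping difference,
`2 / x³ ≤ 1 / (x - 1/2)² - 1 / (x + 1/2)²` for `x > 1/2`, so with `x = m + y` the sum
`2 ∑ 1 / (m + y)³` is at most the first term `1 / (y - 1/2)²` of the telescoping series.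
-/

theorem hasSum_sub_succ_of_antitone {f : ℕ → ℝ} {l : ℝ} (hf : Antitone f)
    (hl : Tendsto f atTop (𝓝 l)) : HasSum (fun n => f n - f (n + 1)) (f 0 - l) := by
  rw [hasSum_iff_tendsto_nat_of_nonneg fun n => sub_nonneg.2 (hf n.le_succ)]
  simpa only [Finset.sum_range_sub'] using tendsto_const_nhds.sub hl

theorem tsum_le_sub_of_le_sub_succ {a f : ℕ → ℝ} {l : ℝ} (ha : 0 ≤ a)
    (hle : ∀ n, a n ≤ f n - f (n + 1)) (hl : Tendsto f atTop (𝓝 l)) :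
    ∑' n, a n ≤ f 0 - l := by
  have hf : Antitone f :=
    antitone_nat_of_succ_le fun n => sub_nonneg.1 ((ha n).trans (hle n))
  have hsum := hasSum_sub_succ_of_antitone hf hl
  exact (hasSum_le hle ((Summable.of_nonneg_of_le ha hle hsum.summable).hasSum) hsum)

theorem two_div_cube_le_inv_sq_sub_inv_sq {x : ℝ} (hx : 1 / 2 < x) :
    2 / x ^ 3 ≤ 1 / (x - 1 / 2) ^ 2 - 1 / (x + 1 / 2) ^ 2 := by
  have h₀ : 0 < x := by linarith
  have h₁ : 0 < x - 1 / 2 := by linarith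
  have h₂ : 0 < x + 1 / 2 := by linarith
  have hdiff : 1 / (x - 1 / 2) ^ 2 - 1 / (x + 1 / 2) ^ 2
      = 2 * x / ((x - 1 / 2) * (x + 1 / 2)) ^ 2 := by
    rw [div_sub_div _ _ (by positivity) (by positivity)]
    congr 1 <;> ring
  rw [hdiff, div_le_div_iff₀ (by positivity) (by positivity)]
  nlinarith [mul_pos h₀ h₀]

theorem tendsto_one_div_add_sq_atTop (c : ℝ) :
    Tendsto (fun n : ℕ => 1 / ((n : ℝ) + c) ^ 2) atTop (𝓝 0) := by
  have h : Tendsto (fun n : ℕ => ((n : ℝ) + c) ^ 2) atTop atTop :=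
    (tendsto_pow_atTop two_ne_zero).comp
      (tendsto_atTop_add_const_right atTop c tendsto_natCast_atTop_atTop)
  simpa only [one_div, Pi.inv_def] using h.inv_tendsto_atTop

theorem stmt3 (y : ℝ) (hy : 1 < y) : psi2 y ≥ -1/(y - 1/2)^2 := by
  have hterm : ∀ m : ℕ, 2 * (1 / ((m : ℝ) + y) ^ 3) ≤
      1 / ((m : ℝ) + (y - 1 / 2)) ^ 2 - 1 / (((m + 1 : ℕ) : ℝ) + (y - 1 / 2)) ^ 2 := by
    intro m
    have hm : (0 : ℝ) ≤ m := m.cast_nonneg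
    convert two_div_cube_le_inv_sq_sub_inv_sq (x := m + y) (by linarith) using 3 <;>
      push_cast <;> ring
  have hbound := tsum_le_sub_of_le_sub_succ (fun m => by positivity) hterm
    (tendsto_one_div_add_sq_atTop (y - 1 / 2))
  rw [tsum_mul_left] at hbound
  simp only [psi2, Nat.cast_zero, zero_add, sub_zero, neg_div] at hbound ⊢
  linarith
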